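/- Let 𝒜 be a locally λ-presentable category, T a λ-accessible endofunctor, and (A,B,f) ∈ T/𝒜 with the λ-directed poset D = D_{(A,B,f)} of tuples (i,j,k,q) as constructed in the paper, together with choices k(i,j) ∈ 𝒦 and q(i,j) : P_{i,j} → B_{k(i,j)} such that f ∘ Tα_i ∘ p_{i,j} = β_{k(i,j)} ∘ q(i,j). Then the subposet D' = {(i,j,k,q) ∈ D | k ≥ k(i,j) and q = β_{k(i,j)→k} ∘ q(i,j)} is cofinal in D, hence λ-directed. -/

import Mathlib

set_option linter.unusedSectionVars false

universe v u

open CategoryTheory Limits Opposite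

/-- A poset is `κ`-directed if every subset of cardinality `< κ` has an upper bound. -/
def IsCardinalDirected (κ : Cardinal.{v}) (D : Type v) [Preorder D] : Prop :=
  ∀ S : Set D, Cardinal.mk S < κ → ∃ b : D, ∀ s ∈ S, s ≤ b

variable {C : Type u} [Category.{v} C] (T : C ⥤ C)
  {I : Type v} [PartialOrder I] {K : Type v} [PartialOrder K]
  {J : I → Type v} [∀ i, PartialOrder (J i)]
  (A : I ⥤ C) (B : K ⥤ C) (Pf : ∀ i, J i ⥤ C)
  (cA : Cocone A) (cB : Cocone B)
  (pc : ∀ i, Pf i ⟶ (Functor.const (J i)).obj (T.obj (A.obj i)))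
  (f : T.obj cA.pt ⟶ cB.pt)

/-- An element of the poset `D_{(A,B,f)}`: a tuple `(i, j, k, q)` with
`q : P_{i,j} ⟶ B_k` such that `f ∘ Tα_i ∘ p_{i,j} = β_k ∘ q`. -/
structure DElem : Type v where
  i : I
  j : J i
  k : K
  q : (Pf i).obj j ⟶ B.obj k
  compat : (pc i).app j ≫ T.map (cA.ι.app i) ≫ f = q ≫ cB.ι.app k

/-- Transport of objects of `P` along an equality of indices. -/
theorem DElem.obj_eq {i i' : I} (h : i = i') (j : J i) :
    (Pf i).obj j = (Pf i').obj (congrArg J h ▸ j) := by subst h; rfl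

/-- The ordering on `D_{(A,B,f)}`: `(i,j,k,q) ≤ (i',j',k',q')` iff either (AA) `i = i'`,
`j ≤ j'`, `k ≤ k'` and `β_{k→k'} ∘ q = q' ∘ p_{i,j→j'}`, or (BB) `i < i'`, `k ≤ k'` and
there is `r : P_{i,j} ⟶ P_{i',j'}` with `Tα_{i→i'} ∘ p_{i,j} = p_{i',j'} ∘ r` and
`β_{k→k'} ∘ q = q' ∘ r`. -/
def DLe (d d' : DElem T A B Pf cA cB pc f) : Prop :=
  (∃ hi : d.i = d'.i, ∃ hj : (congrArg J hi ▸ d.j : J d'.i) ≤ d'.j, ∃ hk : d.k ≤ d'.k,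
    d.q ≫ B.map (homOfLE hk) =
      (eqToHom (DElem.obj_eq Pf hi d.j) ≫ (Pf d'.i).map (homOfLE hj)) ≫ d'.q) ∨
  (∃ hlt : d.i < d'.i, ∃ hk : d.k ≤ d'.k,
    ∃ r : (Pf d.i).obj d.j ⟶ (Pf d'.i).obj d'.j,
      (pc d.i).app d.j ≫ T.map (A.map (homOfLE hlt.le)) = r ≫ (pc d'.i).app d'.j ∧
      d.q ≫ B.map (homOfLE hk) = r ≫ d'.q)

/-- An object `X` is `κ`-presentable if `Hom(X, -)` preserves colimits indexed by
`κ`-directed posets. -/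
def IsPresentableObj (κ : Cardinal.{v}) {𝒞 : Type u} [Category.{v} 𝒞] (X : 𝒞) : Prop :=
  ∀ (D : Type v) [PartialOrder D], IsCardinalDirected κ D →
    Nonempty (PreservesColimitsOfShape D (coyoneda.obj (op X)))

/-!
Everything rests on the `κ`-presentability of the `P_{i,j}`: a map `P_{i,j} ⟶ colim B` factors
through some `B_k`, and two such factorizations agree after passing to a larger index. For
`d = (i, j, k, q)`, both `q` and `q(i,j)` factor `f ∘ Tα_i ∘ p_{i,j}`, so they agree in some
`B_{k'}`; this gives `d ≤ (i, j, k', β_{k(i,j)→k'} ∘ q(i,j)) ∈ D'`. For fewer than `κ`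
elements of `D'`, bound their `i`'s by `i*`, factor each `Tα_{i→i*} ∘ p_{i,j}` through some
`P_{i*,j'}` (the `P_{i*,-}` have colimit `TA_{i*}`), bound these `j'` by `j*`, and finally
bound the indices `k'` produced by the first argument.
-/

open scoped Cardinal

section Directed

variable {κ : Cardinal.{v}} {D : Type v} [PartialOrder D]

theorem IsCardinalDirected.exists_forall_le (h : IsCardinalDirected κ D) {ι : Type v}
    (g : ι → D) (hι : #ι < κ) : ∃ b, ∀ i, g i ≤ b := by
  obtain ⟨b, hb⟩ := h (Set.range g) (Cardinal.mk_range_le.trans_lt hι)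
  exact ⟨b, fun i => hb _ ⟨i, rfl⟩⟩

theorem IsCardinalDirected.isDirected (h : IsCardinalDirected κ D) (hκ : ℵ₀ ≤ κ) :
    IsDirected D (· ≤ ·) where
  directed a b := by
    obtain ⟨c, hc⟩ := h {a, b} ((Set.toFinite _).lt_aleph0.trans_le hκ)
    exact ⟨c, hc a (by simp), hc b (by simp)⟩

theorem IsCardinalDirected.isFiltered (h : IsCardinalDirected κ D) (hκ : ℵ₀ ≤ κ) :
    IsFiltered D := by
  obtain ⟨b, -⟩ := h ∅ (by simpa using Cardinal.aleph0_pos.trans_le hκ)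
  have : Nonempty D := ⟨b⟩
  have := h.isDirected hκ
  infer_instance

variable {𝒞 : Type u} [Category.{v} 𝒞] {F : D ⥤ 𝒞} {c : Cocone F} {X : 𝒞}

theorem IsPresentableObj.exists_hom_of_isColimit (hX : IsPresentableObj κ X)
    (hD : IsCardinalDirected κ D) (hc : IsColimit c) (g : X ⟶ c.pt) :
    ∃ (k : D) (p : X ⟶ F.obj k), p ≫ c.ι.app k = g := by
  obtain ⟨_⟩ := hX D hD
  exact exists_hom_of_preservesColimit_coyoneda hc g

theorem IsPresentableObj.exists_eq_of_isColimit (hX : IsPresentableObj κ X)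
    (hD : IsCardinalDirected κ D) (hκ : ℵ₀ ≤ κ) (hc : IsColimit c) {i j : D}
    (g₁ : X ⟶ F.obj i) (g₂ : X ⟶ F.obj j) (h : g₁ ≫ c.ι.app i = g₂ ≫ c.ι.app j) :
    ∃ (k : D) (hi : i ≤ k) (hj : j ≤ k),
      g₁ ≫ F.map (homOfLE hi) = g₂ ≫ F.map (homOfLE hj) := by
  have := hD.isFiltered hκ
  obtain ⟨_⟩ := hX D hD
  obtain ⟨k, u, v, huv⟩ := exists_eq_of_preservesColimit_coyoneda hc g₁ g₂ h
  exact ⟨k, leOfHom u, leOfHom v, huv⟩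

end Directed

section DPoset

variable {T A B Pf cA cB pc f}
  {kc : ∀ i, J i → K} {qc : ∀ i (j : J i), (Pf i).obj j ⟶ B.obj (kc i j)}
  (hqc : ∀ i (j : J i), (pc i).app j ≫ T.map (cA.ι.app i) ≫ f = qc i j ≫ cB.ι.app (kc i j))

local infix:50 " ≼ " => DLe T A B Pf cA cB pc f

def DElem.ofChoice (i : I) (j : J i) (k : K) (hk : kc i j ≤ k) :
    DElem T A B Pf cA cB pc f where
  i := i
  j := j
  k := k
  q := qc i j ≫ B.map (homOfLE hk)
  compat := by rw [hqc, Category.assoc, cB.w]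

theorem DLe.ofChoice_of_le {d : DElem T A B Pf cA cB pc f} {i : I} {j : J i} {k k' : K}
    {hk : kc i j ≤ k} (h : d ≼ .ofChoice hqc i j k hk) (hkk' : k ≤ k') :
    d ≼ .ofChoice hqc i j k' (hk.trans hkk') := by
  have push (r : (Pf d.i).obj d.j ⟶ (Pf i).obj j) (hdk : d.k ≤ k)
      (he : d.q ≫ B.map (homOfLE hdk) = r ≫ qc i j ≫ B.map (homOfLE hk)) :
      d.q ≫ B.map (homOfLE (hdk.trans hkk')) =
        r ≫ qc i j ≫ B.map (homOfLE (hk.trans hkk')) := by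
    have := he =≫ B.map (homOfLE hkk')
    simpa only [Category.assoc, ← Functor.map_comp, homOfLE_comp] using this
  rcases h with ⟨hi, hj, hdk, he⟩ | ⟨hlt, hdk, r, hr, he⟩
  · exact Or.inl ⟨hi, hj, hdk.trans hkk', push _ hdk he⟩
  · exact Or.inr ⟨hlt, hdk.trans hkk', r, hr, push r hdk he⟩

variable {κ : Cardinal.{v}}

theorem DElem.exists_le_ofChoice_of_comp
    (hqc : ∀ i (j : J i), (pc i).app j ≫ T.map (cA.ι.app i) ≫ f = qc i j ≫ cB.ι.app (kc i j))
    (hκ : ℵ₀ ≤ κ) (hK : IsCardinalDirected κ K) (hcB : IsColimit cB)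
    (d : DElem T A B Pf cA cB pc f) (hd : IsPresentableObj κ ((Pf d.i).obj d.j)) {i : I} {j : J i}
    (r : (Pf d.i).obj d.j ⟶ (Pf i).obj j)
    (hr : r ≫ (pc i).app j ≫ T.map (cA.ι.app i) = (pc d.i).app d.j ≫ T.map (cA.ι.app d.i)) :
    ∃ (k : K) (hdk : d.k ≤ k) (hk : kc i j ≤ k),
      d.q ≫ B.map (homOfLE hdk) = r ≫ qc i j ≫ B.map (homOfLE hk) := by
  have h : d.q ≫ cB.ι.app d.k = (r ≫ qc i j) ≫ cB.ι.app (kc i j) := by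
    rw [← d.compat, ← reassoc_of% hr, hqc, Category.assoc]
  obtain ⟨k, hdk, hk, he⟩ := hd.exists_eq_of_isColimit hK hκ hcB _ _ h
  exact ⟨k, hdk, hk, by simpa only [Category.assoc] using he⟩

theorem DElem.exists_forall_le_ofChoice (hκ : ℵ₀ ≤ κ) (hK : IsCardinalDirected κ K)
    (hcB : IsColimit cB) (d : DElem T A B Pf cA cB pc f)
    (hd : IsPresentableObj κ ((Pf d.i).obj d.j)) {i : I} (hi : d.i ≤ i)
    (hJ : IsCardinalDirected κ (J i))
    (hcP : IsColimit (Cocone.mk (T.obj (A.obj i)) (pc i))) :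
    ∃ j₀ : J i, ∀ j, j₀ ≤ j → ∃ (k : K) (hk : kc i j ≤ k), d ≼ .ofChoice hqc i j k hk := by
  obtain rfl | hlt := hi.eq_or_lt
  · refine ⟨d.j, fun j hj => ?_⟩
    obtain ⟨k, hdk, hk, he⟩ := d.exists_le_ofChoice_of_comp hqc hκ hK hcB hd
      ((Pf d.i).map (homOfLE hj)) (by simp [(pc d.i).naturality_assoc])
    refine ⟨k, hk, Or.inl ⟨rfl, hj, hdk, ?_⟩⟩
    -- the `eqToHom` of an (AA) relation is along `d.i = d.i`, hence definitionally `𝟙`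
    show _ = (𝟙 _ ≫ (Pf d.i).map (homOfLE hj)) ≫ qc d.i j ≫ B.map (homOfLE hk)
    rwa [Category.id_comp]
  · obtain ⟨j₀, r₀, hr₀⟩ := hd.exists_hom_of_isColimit hJ hcP
      ((pc d.i).app d.j ≫ T.map (A.map (homOfLE hi)))
    refine ⟨j₀, fun j hj => ?_⟩
    let r := r₀ ≫ (Pf i).map (homOfLE hj)
    have hr : r ≫ (pc i).app j = (pc d.i).app d.j ≫ T.map (A.map (homOfLE hlt.le)) := by
      simpa [r, (pc i).naturality] using hr₀
    obtain ⟨k, hdk, hk, he⟩ := d.exists_le_ofChoice_of_comp hqc hκ hK hcB hd r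
      (by rw [reassoc_of% hr, ← T.map_comp, cA.w])
    exact ⟨k, hk, Or.inr ⟨hlt, hdk, r, hr.symm, he⟩⟩

end DPoset

theorem Dsub_cofinal (κ : Cardinal.{v}) (hκ : κ.IsRegular)
    (hI : IsCardinalDirected κ I) (hK : IsCardinalDirected κ K)
    (hJ : ∀ i, IsCardinalDirected κ (J i))
    (hP : ∀ i (j : J i), IsPresentableObj κ ((Pf i).obj j))
    (hcB : IsColimit cB)
    (hcP : ∀ i, Nonempty (IsColimit (Cocone.mk (T.obj (A.obj i)) (pc i))))
    (kc : ∀ i, J i → K) (qc : ∀ i (j : J i), (Pf i).obj j ⟶ B.obj (kc i j))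
    (hqc : ∀ i (j : J i),
      (pc i).app j ≫ T.map (cA.ι.app i) ≫ f = qc i j ≫ cB.ι.app (kc i j)) :
    letI D' : Set (DElem T A B Pf cA cB pc f) :=
      {d | ∃ hk : kc d.i d.j ≤ d.k, d.q = qc d.i d.j ≫ B.map (homOfLE hk)}
    (∀ d : DElem T A B Pf cA cB pc f, ∃ d' ∈ D', DLe T A B Pf cA cB pc f d d') ∧
      (∀ S : Set D', Cardinal.mk S < κ →
        ∃ ub : D', ∀ s ∈ S, DLe T A B Pf cA cB pc f s.1 ub.1) := by
  have hκ₀ := hκ.aleph0_le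
  refine ⟨fun d => ?_, fun S hS => ?_⟩
  · obtain ⟨j₀, hj₀⟩ := d.exists_forall_le_ofChoice hqc hκ₀ hK hcB (hP _ _) le_rfl (hJ d.i)
      (hcP d.i).some
    obtain ⟨k, hk, hd⟩ := hj₀ j₀ le_rfl
    exact ⟨_, ⟨hk, rfl⟩, hd⟩
  · obtain ⟨i, hi⟩ := hI.exists_forall_le (fun s : S => s.1.1.i) hS
    choose j₀ hj₀ using fun s : S => s.1.1.exists_forall_le_ofChoice hqc hκ₀ hK hcB
      (hP _ _) (hi s) (hJ i) (hcP i).some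
    obtain ⟨j, hj⟩ := (hJ i).exists_forall_le j₀ hS
    choose k hk hle using fun s => hj₀ s j (hj s)
    obtain ⟨k', hk'⟩ := hK.exists_forall_le k hS
    obtain ⟨k'', hk'k'', hkck''⟩ := (hK.isDirected hκ₀).directed k' (kc i j)
    exact ⟨⟨.ofChoice hqc i j k'' hkck'', hkck'', rfl⟩,
      fun s hs => (hle ⟨s, hs⟩).ofChoice_of_le hqc ((hk' _).trans hk'k'')⟩
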